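/- Let L be the Laplacian of a strongly connected weighted digraph on n ≥ 2 nodes, let ξ be its normalized positive left eigenvector for eigenvalue 0, let Ξ = diag(ξ), and let B = (ΞL + LᵀΞ)/2. Then the undirected graph associated with B (with an edge between distinct i and j whenever b_ij < 0) is connected; consequently, for y ∈ ℝⁿ, yᵀ B y = 0 if and only if y is a constant vector. -/

import Mathlib

/-! Off the diagonal, `B u v = -(ξ u * A u v + ξ v * A v u) / 2`, so every edge of the digraph
is an edge of the graph of `B`, and strong connectivity of the digraph gives connectivity of that
graph. Since `ξᵀL = 0`, the `ξ`-weighted column sums of `A` equal `ξ j` times its row sums; this turns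
`yᵀBy = yᵀΞLy` into `½ ∑ᵢⱼ ξᵢ aᵢⱼ (yᵢ - yⱼ)²`, which vanishes iff `y` is constant along every
edge, i.e. iff `y` is constant. -/

open Matrix BigOperators

theorem Relation.TransGen.eq_of_forall {α β : Type*} {r : α → α → Prop} {f : α → β}
    (hf : ∀ a b, r a b → f a = f b) {a b : α} (h : Relation.TransGen r a b) : f a = f b :=
  h.closed' (P := fun x => f x = f b) (fun hr hb => (hf _ _ hr).trans hb) rfl

theorem exists_forall_eq_of_transGen {α β : Type*} [Nonempty β] {r : α → α → Prop} {f : α → β}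
    (hr : ∀ a b, a ≠ b → Relation.TransGen r a b) (hf : ∀ a b, r a b → f a = f b) :
    ∃ c, ∀ a, f a = c := by
  rcases isEmpty_or_nonempty α with _ | ⟨⟨a₀⟩⟩
  · exact ⟨Classical.arbitrary β, isEmptyElim⟩
  · refine ⟨f a₀, fun a => ?_⟩
    by_cases h : a = a₀
    · rw [h]
    · exact (hr a a₀ h).eq_of_forall hf

theorem sum_sum_mul_sq_sub_eq_zero_iff {ι : Type*} [Fintype ι] {A : Matrix ι ι ℝ} {ξ : ι → ℝ}
    (hA : ∀ i j, 0 ≤ A i j) (hξ : ∀ i, 0 < ξ i) (y : ι → ℝ) :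
    ∑ i, ∑ j, ξ i * A i j * (y i - y j) ^ 2 = 0 ↔ ∀ i j, 0 < A i j → y i = y j := by
  have hnonneg : ∀ i j, 0 ≤ ξ i * A i j * (y i - y j) ^ 2 := fun i j =>
    mul_nonneg (mul_nonneg (hξ i).le (hA i j)) (sq_nonneg _)
  rw [Fintype.sum_eq_zero_iff_of_nonneg fun i => Fintype.sum_nonneg (hnonneg i)]
  simp only [funext_iff, Pi.zero_apply]
  refine forall_congr' fun i => ?_
  rw [Fintype.sum_eq_zero_iff_of_nonneg (hnonneg i)]
  simp only [funext_iff, Pi.zero_apply]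
  refine forall_congr' fun j => ?_
  rcases (hA i j).eq_or_lt with h | h
  · simp [← h]
  · simp [h, h.ne', (hξ i).ne', sub_eq_zero]

namespace WeightedDigraph

variable {ι : Type*} [Fintype ι] [DecidableEq ι]

def laplacian (A : Matrix ι ι ℝ) : Matrix ι ι ℝ :=
  diagonal (fun i => ∑ k, A i k) - A

noncomputable def symmetrizedLaplacian (ξ : ι → ℝ) (A : Matrix ι ι ℝ) : Matrix ι ι ℝ :=
  (2 : ℝ)⁻¹ • (diagonal ξ * laplacian A + (laplacian A)ᵀ * diagonal ξ)

theorem laplacian_apply (A : Matrix ι ι ℝ) (i j : ι) :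
    laplacian A i j = if i = j then ∑ k ∈ Finset.univ.erase i, A i k else -A i j := by
  split_ifs with h
  · subst h
    simp [laplacian, Finset.sum_erase_eq_sub (Finset.mem_univ i)]
  · simp [laplacian, h]

theorem sum_mul_eq_mul_sum_of_vecMul_laplacian_eq_zero {A : Matrix ι ι ℝ} {ξ : ι → ℝ}
    (hξ : ξ ᵥ* laplacian A = 0) (j : ι) : ∑ i, ξ i * A i j = ξ j * ∑ k, A j k := by
  have := congrFun hξ j
  rw [laplacian, vecMul_sub, Pi.sub_apply, vecMul_diagonal, Pi.zero_apply, sub_eq_zero] at this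
  exact this.symm

theorem symmetrizedLaplacian_apply_of_ne (ξ : ι → ℝ) (A : Matrix ι ι ℝ) {u v : ι} (huv : u ≠ v) :
    symmetrizedLaplacian ξ A u v = -2⁻¹ * (ξ u * A u v + ξ v * A v u) := by
  simp only [symmetrizedLaplacian, laplacian, transpose_sub, diagonal_transpose,
    Matrix.smul_apply, Matrix.add_apply, diagonal_mul, Matrix.sub_apply, ne_eq, huv,
    not_false_eq_true, diagonal_apply_ne, zero_sub, mul_neg, mul_diagonal, transpose_apply,
    neg_mul, smul_eq_mul]
  ring

theorem symmetrizedLaplacian_neg_of_pos {A : Matrix ι ι ℝ} {ξ : ι → ℝ} (hA : ∀ i j, 0 ≤ A i j)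
    (hdiag : ∀ i, A i i = 0) (hξ : ∀ i, 0 < ξ i) {u v : ι} (huv : 0 < A u v) :
    symmetrizedLaplacian ξ A u v < 0 := by
  have hne : u ≠ v := by
    rintro rfl
    exact huv.ne' (hdiag u)
  rw [symmetrizedLaplacian_apply_of_ne ξ A hne]
  have := mul_nonneg (hξ v).le (hA v u)
  have := mul_pos (hξ u) huv
  linarith

theorem dotProduct_diagonal_mul_laplacian_mulVec {A : Matrix ι ι ℝ} {ξ : ι → ℝ}
    (hξ : ξ ᵥ* laplacian A = 0) (y : ι → ℝ) :
    y ⬝ᵥ (diagonal ξ * laplacian A) *ᵥ y = 2⁻¹ * ∑ i, ∑ j, ξ i * A i j * (y i - y j) ^ 2 := by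
  have hcol : ∑ i, ∑ j, ξ i * A i j * y j ^ 2 = ∑ i, ∑ j, ξ i * A i j * y i ^ 2 := by
    rw [Finset.sum_comm]
    refine Finset.sum_congr rfl fun j _ => ?_
    rw [← Finset.sum_mul, sum_mul_eq_mul_sum_of_vecMul_laplacian_eq_zero hξ, Finset.mul_sum,
      Finset.sum_mul]
  have hexpand : ∀ i j, ξ i * A i j * (y i - y j) ^ 2
      = ξ i * A i j * y i ^ 2 + ξ i * A i j * y j ^ 2 - 2 * (ξ i * A i j * y i * y j) :=
    fun i j => by ring
  calc y ⬝ᵥ (diagonal ξ * laplacian A) *ᵥ y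
      = ∑ i, ∑ j, ξ i * A i j * y i ^ 2 - ∑ i, ∑ j, ξ i * A i j * y i * y j := by
        rw [laplacian, ← mulVec_mulVec, sub_mulVec]
        simp only [dotProduct, mulVec_diagonal, Pi.sub_apply]
        simp only [mulVec, dotProduct, Finset.sum_mul, Finset.mul_sum, mul_sub,
          ← Finset.sum_sub_distrib]
        exact Finset.sum_congr rfl fun i _ => Finset.sum_congr rfl fun j _ => by ring
    _ = 2⁻¹ * ∑ i, ∑ j, ξ i * A i j * (y i - y j) ^ 2 := by
        simp only [hexpand, Finset.sum_sub_distrib, Finset.sum_add_distrib, hcol, ← Finset.mul_sum]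
        ring

theorem dotProduct_symmetrizedLaplacian_mulVec {A : Matrix ι ι ℝ} {ξ : ι → ℝ}
    (hξ : ξ ᵥ* laplacian A = 0) (y : ι → ℝ) :
    y ⬝ᵥ symmetrizedLaplacian ξ A *ᵥ y = 2⁻¹ * ∑ i, ∑ j, ξ i * A i j * (y i - y j) ^ 2 := by
  have hT : (laplacian A)ᵀ * diagonal ξ = (diagonal ξ * laplacian A)ᵀ := by
    rw [transpose_mul, diagonal_transpose]
  rw [symmetrizedLaplacian, hT, smul_mulVec, add_mulVec, dotProduct_smul, dotProduct_add,
    dotProduct_transpose_mulVec, ← two_mul, smul_eq_mul, ← mul_assoc, inv_mul_cancel₀ two_ne_zero,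
    one_mul, dotProduct_diagonal_mul_laplacian_mulVec hξ]

end WeightedDigraph

open WeightedDigraph in
theorem symmetrized_laplacian_graph_connected_general
    (n : ℕ) (A : Matrix (Fin n) (Fin n) ℝ)
    (hA : ∀ i j, 0 ≤ A i j) (hdiag : ∀ i, A i i = 0)
    (hSC : ∀ i j : Fin n, i ≠ j → Relation.TransGen (fun u v => 0 < A u v) i j)
    (L : Matrix (Fin n) (Fin n) ℝ)
    (hL : ∀ i j, L i j = if i = j then ∑ k ∈ Finset.univ.erase i, A i k else -A i j)
    (ξ : Fin n → ℝ) (hξpos : ∀ i, 0 < ξ i)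
    (hξ : ξ ᵥ* L = 0)
    (B : Matrix (Fin n) (Fin n) ℝ)
    (hB : B = ((2 : ℝ)⁻¹) • (Matrix.diagonal ξ * L + Lᵀ * Matrix.diagonal ξ)) :
    (∀ i j : Fin n, i ≠ j → Relation.TransGen (fun u v => B u v < 0) i j) ∧
    (∀ y : Fin n → ℝ, y ⬝ᵥ (B *ᵥ y) = 0 ↔ ∃ c : ℝ, ∀ i, y i = c) := by
  obtain rfl : L = laplacian A :=
    Matrix.ext fun i j => (hL i j).trans (laplacian_apply A i j).symm
  obtain rfl : B = symmetrizedLaplacian ξ A := hB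
  refine ⟨fun i j hij => Relation.TransGen.mono
    (fun _ _ => symmetrizedLaplacian_neg_of_pos hA hdiag hξpos) i j (hSC i j hij), fun y => ?_⟩
  rw [dotProduct_symmetrizedLaplacian_mulVec hξ, mul_eq_zero, or_iff_right (by norm_num),
    sum_sum_mul_sq_sub_eq_zero_iff hA hξpos]
  constructor
  · exact exists_forall_eq_of_transGen hSC
  · rintro ⟨c, hc⟩ i j _
    rw [hc i, hc j]

/-- For a strongly connected weighted digraph on `n ≥ 2` nodes
with Laplacian `L`, normalized positive left eigenvector `ξ`, `Ξ = diag(ξ)` and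
`B = (ΞL + LᵀΞ)/2`, the undirected graph of `B` (edge between distinct `i, j`
iff `b_ij < 0`) is connected; consequently `yᵀBy = 0` iff `y` is constant. -/
theorem symmetrized_laplacian_graph_connected
    (n : ℕ) (hn : 2 ≤ n) (A : Matrix (Fin n) (Fin n) ℝ)
    (hA : ∀ i j, 0 ≤ A i j) (hdiag : ∀ i, A i i = 0)
    (hSC : ∀ i j : Fin n, i ≠ j → Relation.TransGen (fun u v => 0 < A u v) i j)
    (L : Matrix (Fin n) (Fin n) ℝ)
    (hL : ∀ i j, L i j = if i = j then ∑ k ∈ Finset.univ.erase i, A i k else -A i j)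
    (ξ : Fin n → ℝ) (hξpos : ∀ i, 0 < ξ i) (hξsum : ∑ i, ξ i = 1)
    (hξ : ξ ᵥ* L = 0)
    (B : Matrix (Fin n) (Fin n) ℝ)
    (hB : B = ((2 : ℝ)⁻¹) • (Matrix.diagonal ξ * L + Lᵀ * Matrix.diagonal ξ)) :
    (∀ i j : Fin n, i ≠ j → Relation.TransGen (fun u v => B u v < 0) i j) ∧
    (∀ y : Fin n → ℝ, y ⬝ᵥ (B *ᵥ y) = 0 ↔ ∃ c : ℝ, ∀ i, y i = c) :=
  symmetrized_laplacian_graph_connected_general n A hA hdiag hSC L hL ξ hξpos hξ B hB
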